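/- Let n, k ∈ ℕ with 2 ≤ k ≤ n, and set r = ⌊(n−2)/(k−1)⌋. Let G = (V,E) be a loopless directed graph on [n] such that for every u and every v with u < v ≤ min{u+r, n} we have (u,v) ∉ E (no edges from a vertex to any of the r vertices immediately following it). Then the set P(G) = {v : top(G_v) = v} has cardinality at most k. -/
import Mathlib


open Finset

abbrev Edges (n : ℕ) := Finset (Fin n × Fin n)

/-- No self-loops. -/
def Loopless {n : ℕ} (E : Edges n) : Prop := ∀ e ∈ E, e.1 ≠ e.2

/-- Indegree of `v`. -/
def indeg {n : ℕ} (E : Edges n) (v : Fin n) : ℕ :=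
  (E.filter (fun e => e.2 = v)).card

/-- Outdegree of `v`. -/
def outdeg {n : ℕ} (E : Edges n) (v : Fin n) : ℕ :=
  (E.filter (fun e => e.1 = v)).card

/-- Maximum indegree Δ(G). -/
def maxIndeg {n : ℕ} (E : Edges n) : ℕ :=
  Finset.univ.sup (indeg E)

/-- Remove all outgoing edges of `v` (the graph `G_v`). -/
def removeOut {n : ℕ} (E : Edges n) (v : Fin n) : Edges n :=
  E.filter (fun e => e.1 ≠ v)

/-- Lexicographic comparison of pairs (indegree, index). -/
def lexLt {n : ℕ} (E : Edges n) (u v : Fin n) : Prop :=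
  indeg E u < indeg E v ∨ (indeg E u = indeg E v ∧ u < v)

/-- `v` is selected by asymmetric plurality with runners-up: `top(G_v) = v`,
i.e. `v` lex-dominates every other vertex in `G_v`. -/
def selected {n : ℕ} (E : Edges n) (v : Fin n) : Prop :=
  ∀ w, w ≠ v → lexLt (removeOut E v) w v

open Classical in
/-- The selected set `P(G)`. -/
noncomputable def P {n : ℕ} (E : Edges n) : Finset (Fin n) :=
  Finset.univ.filter (fun v => selected E v)

lemma indeg_removeOut_self {n : ℕ} {E : Edges n} (hE : Loopless E) (v : Fin n) :
    indeg (removeOut E v) v = indeg E v := by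
  unfold indeg removeOut
  rw [Finset.filter_filter]
  apply congrArg
  apply Finset.filter_congr
  intro e he
  have := hE e he
  constructor
  · rintro ⟨_, h⟩; exact h
  · intro h; exact ⟨fun h1 => this (h1.trans h.symm), h⟩

lemma indeg_removeOut_le {n : ℕ} (E : Edges n) (v w : Fin n) :
    indeg (removeOut E v) w ≤ indeg E w := by
  apply Finset.card_le_card
  intro e he
  simp only [removeOut, Finset.mem_filter] at he ⊢
  exact ⟨he.1.1, he.2⟩

lemma indeg_le_removeOut_add_one {n : ℕ} (E : Edges n) (v w : Fin n) :
    indeg E w ≤ indeg (removeOut E v) w + 1 := by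
  unfold indeg removeOut
  rw [Finset.filter_filter]
  have hsub : E.filter (fun e => e.2 = w) ⊆
      (E.filter (fun e => e.1 ≠ v ∧ e.2 = w)) ∪ {(v, w)} := by
    intro e he
    simp only [Finset.mem_filter, Finset.mem_union, Finset.mem_singleton] at he ⊢
    by_cases h1 : e.1 = v
    · right
      exact Prod.ext h1 he.2
    · left; exact ⟨he.1, h1, he.2⟩
  calc (E.filter (fun e => e.2 = w)).card
      ≤ ((E.filter (fun e => e.1 ≠ v ∧ e.2 = w)) ∪ {(v, w)}).card :=
        Finset.card_le_card hsub
    _ ≤ (E.filter (fun e => e.1 ≠ v ∧ e.2 = w)).card + 1 := by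
        apply (Finset.card_union_le _ _).trans
        simp
  
lemma indeg_removeOut_eq_of_not_mem {n : ℕ} (E : Edges n) (v w : Fin n)
    (h : (v, w) ∉ E) : indeg (removeOut E v) w = indeg E w := by
  unfold indeg removeOut
  rw [Finset.filter_filter]
  apply congrArg
  apply Finset.filter_congr
  intro e he
  constructor
  · rintro ⟨_, h2⟩; exact h2
  · intro h2
    refine ⟨fun h1 => ?_, h2⟩
    apply h
    have : e = (v, w) := Prod.ext h1 h2
    rwa [this] at he

/-- Lemma (edge deletion): if no vertex has an edge to any of the
r = ⌊(n−2)/(k−1)⌋ vertices immediately following it, then at most k vertices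
are selected. -/
theorem stmt_10 {n k r : ℕ} (hk1 : 2 ≤ k) (hk2 : k ≤ n)
    (hr : r = (n - 2) / (k - 1))
    (E : Edges n) (hE : Loopless E)
    (hshort : ∀ u v : Fin n, u < v → (v : ℕ) ≤ (u : ℕ) + r → (u, v) ∉ E) :
    (P E).card ≤ k := by
  by_contra hcon
  push_neg at hcon
  -- arithmetic fact: n - 1 ≤ (k-1)*(r+1)
  have hkpos : 0 < k - 1 := by omega
  have harith : n - 1 ≤ (k - 1) * (r + 1) := by
    have h1 := Nat.div_add_mod (n - 2) (k - 1)
    have h2 := Nat.mod_lt (n - 2) hkpos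
    have h3 : (k - 1) * (r + 1) = (k - 1) * r + (k - 1) := by ring
    rw [hr] at h3 ⊢
    set q := (k - 1) * ((n - 2) / (k - 1)) with hq
    omega
  -- pairwise lemma for selected vertices
  have hpair : ∀ u w : Fin n, selected E u → selected E w → u < w →
      indeg E w ≤ indeg E u ∧ indeg E u ≤ indeg E w + 1 ∧
      (indeg E u = indeg E w → (u : ℕ) + r + 1 ≤ (w : ℕ)) := by
    intro u w hu hw huw
    have h1 : lexLt (removeOut E u) w u := hu w (ne_of_gt huw)
    have h2 : lexLt (removeOut E w) u w := hw u (ne_of_lt huw)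
    have e1 : indeg (removeOut E u) u = indeg E u := indeg_removeOut_self hE u
    have e2 : indeg (removeOut E w) w = indeg E w := indeg_removeOut_self hE w
    have h1' : indeg (removeOut E u) w < indeg E u := by
      rcases h1 with h | ⟨_, hlt⟩
      · rwa [e1] at h
      · exact absurd hlt (not_lt.mpr (le_of_lt huw))
    have h2' : indeg (removeOut E w) u ≤ indeg E w := by
      rcases h2 with h | ⟨h, _⟩ <;> rw [e2] at h <;> omega
    have b1 := indeg_le_removeOut_add_one E u w
    have b2 := indeg_le_removeOut_add_one E w u
    refine ⟨by omega, by omega, ?_⟩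
    intro heq
    by_cases hmem : (u, w) ∈ E
    · by_contra hle
      exact hshort u w huw (by omega) hmem
    · have := indeg_removeOut_eq_of_not_mem E u w hmem
      omega
  set m := (P E).card with hm
  have hm1 : k + 1 ≤ m := hcon
  have hmpos : 0 < m := by omega
  let f : Fin m ≃o {x // x ∈ P E} := (P E).orderIsoOfFin rfl
  have hfsel : ∀ i : Fin m, selected E ((f i : {x // x ∈ P E}) : Fin n) := by
    intro i
    have h := (f i).2
    simp only [P, Finset.mem_filter] at h
    exact h.2
  have hfmono : ∀ i j : Fin m, i < j →
      ((f i : {x // x ∈ P E}) : Fin n) < ((f j : {x // x ∈ P E}) : Fin n) := by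
    intro i j hij
    exact Subtype.coe_lt_coe.mpr (f.lt_iff_lt.mpr hij)
  -- value of a vertex as a natural
  let g : Fin m → Fin n := fun i => ((f i : {x // x ∈ P E}) : Fin n)
  have key : ∀ i : ℕ, ∀ hi : i < m,
      (i * (r + 1) ≤ (g ⟨i, hi⟩ : ℕ) + r) ∧
      (indeg E (g ⟨i, hi⟩) = indeg E (g ⟨0, hmpos⟩) →
        i * (r + 1) ≤ (g ⟨i, hi⟩ : ℕ)) := by
    intro i
    induction i with
    | zero => intro hi; constructor <;> simp
    | succ i ih =>
      intro hi
      have hi' : i < m := by omega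
      obtain ⟨ih1, ih2⟩ := ih hi'
      have hlt : (⟨i, hi'⟩ : Fin m) < ⟨i + 1, hi⟩ := by
        simp [Fin.lt_def]
      have hvlt : g ⟨i, hi'⟩ < g ⟨i + 1, hi⟩ := hfmono _ _ hlt
      have hp : indeg E (g ⟨i + 1, hi⟩) ≤ indeg E (g ⟨i, hi'⟩) ∧
          indeg E (g ⟨i, hi'⟩) ≤ indeg E (g ⟨i + 1, hi⟩) + 1 ∧
          (indeg E (g ⟨i, hi'⟩) = indeg E (g ⟨i + 1, hi⟩) →
            (g ⟨i, hi'⟩ : ℕ) + r + 1 ≤ (g ⟨i + 1, hi⟩ : ℕ)) :=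
        hpair _ _ (hfsel ⟨i, hi'⟩) (hfsel ⟨i + 1, hi⟩) hvlt
      have hp0 : indeg E (g ⟨i + 1, hi⟩) ≤ indeg E (g ⟨0, hmpos⟩) ∧
          indeg E (g ⟨0, hmpos⟩) ≤ indeg E (g ⟨i + 1, hi⟩) + 1 := by
        have h0 : (⟨0, hmpos⟩ : Fin m) < ⟨i + 1, hi⟩ := by simp [Fin.lt_def]
        have h : indeg E (g ⟨i + 1, hi⟩) ≤ indeg E (g ⟨0, hmpos⟩) ∧
            indeg E (g ⟨0, hmpos⟩) ≤ indeg E (g ⟨i + 1, hi⟩) + 1 ∧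
            (indeg E (g ⟨0, hmpos⟩) = indeg E (g ⟨i + 1, hi⟩) →
              (g ⟨0, hmpos⟩ : ℕ) + r + 1 ≤ (g ⟨i + 1, hi⟩ : ℕ)) :=
          hpair _ _ (hfsel ⟨0, hmpos⟩) (hfsel ⟨i + 1, hi⟩) (hfmono _ _ h0)
        exact ⟨h.1, h.2.1⟩
      have hpi0 : indeg E (g ⟨i, hi'⟩) ≤ indeg E (g ⟨0, hmpos⟩) ∧
          indeg E (g ⟨0, hmpos⟩) ≤ indeg E (g ⟨i, hi'⟩) + 1 := by
        rcases Nat.eq_zero_or_pos i with h0 | h0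
        · subst h0; exact ⟨le_refl _, by omega⟩
        · have hlt0 : (⟨0, hmpos⟩ : Fin m) < ⟨i, hi'⟩ := by simp [Fin.lt_def]; omega
          have h : indeg E (g ⟨i, hi'⟩) ≤ indeg E (g ⟨0, hmpos⟩) ∧
              indeg E (g ⟨0, hmpos⟩) ≤ indeg E (g ⟨i, hi'⟩) + 1 ∧
              (indeg E (g ⟨0, hmpos⟩) = indeg E (g ⟨i, hi'⟩) →
                (g ⟨0, hmpos⟩ : ℕ) + r + 1 ≤ (g ⟨i, hi'⟩ : ℕ)) :=
            hpair _ _ (hfsel ⟨0, hmpos⟩) (hfsel ⟨i, hi'⟩) (hfmono _ _ hlt0)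
          exact ⟨h.1, h.2.1⟩
      have hmul : (i + 1) * (r + 1) = i * (r + 1) + r + 1 := by ring
      have hvnat : (g ⟨i, hi'⟩ : ℕ) < (g ⟨i + 1, hi⟩ : ℕ) := hvlt
      by_cases hd : indeg E (g ⟨i + 1, hi⟩) = indeg E (g ⟨0, hmpos⟩)
      · -- degrees all equal to top
        have hdi : indeg E (g ⟨i, hi'⟩) = indeg E (g ⟨0, hmpos⟩) := by omega
        have hgap := hp.2.2 (by omega)
        have hbase := ih2 hdi
        constructor
        · omega
        · intro _; omega
      · constructor
        · by_cases hdi : indeg E (g ⟨i, hi'⟩) = indeg E (g ⟨0, hmpos⟩)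
          · have hbase := ih2 hdi
            omega
          · have hdeq : indeg E (g ⟨i, hi'⟩) = indeg E (g ⟨i + 1, hi⟩) := by omega
            have hgap := hp.2.2 hdeq
            omega
        · intro h; exact absurd h hd
  -- conclude
  have hlast : m - 1 < m := by omega
  have hfin : ((g ⟨m - 1, hlast⟩ : Fin n) : ℕ) < n := (g ⟨m - 1, hlast⟩).2
  have hkey := (key (m - 1) hlast).1
  have hge : k * (r + 1) ≤ (m - 1) * (r + 1) :=
    Nat.mul_le_mul_right _ (by omega)
  have hk' : k * (r + 1) = (k - 1) * (r + 1) + r + 1 := by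
    obtain ⟨k0, rfl⟩ : ∃ k0, k = k0 + 1 := ⟨k - 1, by omega⟩
    simp only [Nat.add_sub_cancel]
    ring
  omega
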